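/- Define D(γ) = (e^{-γ}/√π) ∫_{-∞}^∞ e^{-z²}/cosh³(2√γ·z) dz for γ > 0 (equal to -(1/2)·mmse_BPSK'(γ)). Then for all γ > 0, e^{-γ}/√(1+6γ) ≤ D(γ) ≤ e^{-γ}. -/
import Mathlib


open Real

noncomputable def Dbpsk (γ : ℝ) : ℝ :=
  (Real.exp (-γ) / Real.sqrt Real.pi) *
    ∫ z : ℝ, Real.exp (-z ^ 2) / (Real.cosh (2 * Real.sqrt γ * z)) ^ 3

theorem Dbpsk_two_sided (γ : ℝ) (hγ : 0 < γ) :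
    Real.exp (-γ) / Real.sqrt (1 + 6 * γ) ≤ Dbpsk γ ∧ Dbpsk γ ≤ Real.exp (-γ) := by
  set f : ℝ → ℝ := fun z => Real.exp (-z ^ 2) / (Real.cosh (2 * Real.sqrt γ * z)) ^ 3 with hf
  have hcosh1 : ∀ z : ℝ, (1:ℝ) ≤ (Real.cosh (2 * Real.sqrt γ * z)) ^ 3 := fun z =>
    one_le_pow₀ (Real.one_le_cosh _)
  have hfle : ∀ z : ℝ, f z ≤ Real.exp (-z ^ 2) := by
    intro z
    rw [hf]
    calc Real.exp (-z ^ 2) / (Real.cosh (2 * Real.sqrt γ * z)) ^ 3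
        ≤ Real.exp (-z ^ 2) / 1 :=
          div_le_div_of_nonneg_left (Real.exp_pos _).le one_pos (hcosh1 z)
      _ = Real.exp (-z ^ 2) := div_one _
  have hfge : ∀ z : ℝ, Real.exp (-(1 + 6 * γ) * z ^ 2) ≤ f z := by
    intro z
    have h1 : (Real.cosh (2 * Real.sqrt γ * z)) ^ 3 ≤ Real.exp (6 * γ * z ^ 2) := by
      have := Real.cosh_le_exp_half_sq (2 * Real.sqrt γ * z)
      calc (Real.cosh (2 * Real.sqrt γ * z)) ^ 3
          ≤ (Real.exp ((2 * Real.sqrt γ * z) ^ 2 / 2)) ^ 3 :=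
            pow_le_pow_left₀ ((Real.cosh_pos _).le) this 3
        _ = Real.exp (3 * ((2 * Real.sqrt γ * z) ^ 2 / 2)) := by
            rw [← Real.exp_nat_mul]; norm_num
        _ = Real.exp (6 * γ * z ^ 2) := by
            congr 1
            have : Real.sqrt γ ^ 2 = γ := Real.sq_sqrt hγ.le
            ring_nf
            nlinarith [this]
    have hpos : (0:ℝ) < (Real.cosh (2 * Real.sqrt γ * z)) ^ 3 :=
      lt_of_lt_of_le one_pos (hcosh1 z)
    simp only [hf]
    rw [le_div_iff₀ hpos]
    calc Real.exp (-(1 + 6 * γ) * z ^ 2) * (Real.cosh (2 * Real.sqrt γ * z)) ^ 3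
        ≤ Real.exp (-(1 + 6 * γ) * z ^ 2) * Real.exp (6 * γ * z ^ 2) :=
          mul_le_mul_of_nonneg_left h1 (Real.exp_pos _).le
      _ = Real.exp (-z ^ 2) := by rw [← Real.exp_add]; ring_nf
  have hfnn : ∀ z : ℝ, 0 ≤ f z := fun z => le_trans (Real.exp_pos _).le (hfge z)
  have hint1 : MeasureTheory.Integrable (fun z : ℝ => Real.exp (-z ^ 2)) := by
    have := integrable_exp_neg_mul_sq (one_pos (α := ℝ))
    simpa using this
  have hcont : Continuous f := by
    apply Continuous.div (by continuity) (by continuity)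
    intro z
    exact ne_of_gt (lt_of_lt_of_le one_pos (hcosh1 z))
  have hintf : MeasureTheory.Integrable f := by
    refine hint1.mono hcont.aestronglyMeasurable ?_
    filter_upwards with z
    rw [Real.norm_eq_abs, Real.norm_eq_abs, abs_of_nonneg (hfnn z),
      abs_of_nonneg (Real.exp_pos _).le]
    exact hfle z
  have hint2 : MeasureTheory.Integrable (fun z : ℝ => Real.exp (-(1 + 6 * γ) * z ^ 2)) :=
    integrable_exp_neg_mul_sq (by linarith)
  have hI1 : (∫ z : ℝ, Real.exp (-z ^ 2)) = Real.sqrt Real.pi := by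
    have := integral_gaussian (1:ℝ)
    simpa using this
  have hI2 : (∫ z : ℝ, Real.exp (-(1 + 6 * γ) * z ^ 2)) = Real.sqrt Real.pi / Real.sqrt (1 + 6 * γ) := by
    rw [integral_gaussian, Real.sqrt_div Real.pi_pos.le]
  have hc : 0 < Real.exp (-γ) / Real.sqrt Real.pi :=
    div_pos (Real.exp_pos _) (Real.sqrt_pos.mpr Real.pi_pos)
  have hsq : 0 < Real.sqrt (1 + 6 * γ) := Real.sqrt_pos.mpr (by linarith)
  have hIub : (∫ z : ℝ, f z) ≤ Real.sqrt Real.pi := by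
    rw [← hI1]
    exact MeasureTheory.integral_mono hintf hint1 hfle
  have hIlb : Real.sqrt Real.pi / Real.sqrt (1 + 6 * γ) ≤ (∫ z : ℝ, f z) := by
    rw [← hI2]
    exact MeasureTheory.integral_mono hint2 hintf hfge
  constructor
  · have : Dbpsk γ = (Real.exp (-γ) / Real.sqrt Real.pi) * ∫ z : ℝ, f z := rfl
    rw [this]
    calc Real.exp (-γ) / Real.sqrt (1 + 6 * γ)
        = (Real.exp (-γ) / Real.sqrt Real.pi) * (Real.sqrt Real.pi / Real.sqrt (1 + 6 * γ)) := by
          field_simp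
      _ ≤ (Real.exp (-γ) / Real.sqrt Real.pi) * ∫ z : ℝ, f z :=
          mul_le_mul_of_nonneg_left hIlb hc.le
  · have : Dbpsk γ = (Real.exp (-γ) / Real.sqrt Real.pi) * ∫ z : ℝ, f z := rfl
    rw [this]
    calc (Real.exp (-γ) / Real.sqrt Real.pi) * ∫ z : ℝ, f z
        ≤ (Real.exp (-γ) / Real.sqrt Real.pi) * Real.sqrt Real.pi :=
          mul_le_mul_of_nonneg_left hIub hc.le
      _ = Real.exp (-γ) := div_mul_cancel₀ _ (ne_of_gt (Real.sqrt_pos.mpr Real.pi_pos))
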